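/- Let K = 2 and let θ_1, θ_2 be independent Gaussian random variables with θ_i ∼ N(μ̂_i, 1/N_i) for integers N_i ≥ 1. Let π = (π_1, π_2) maximize the M=2 ReMax objective J(π) = Σ_{i,j} π_i π_j E[max(θ_i, θ_j)] (with the diagonal convention E[max(θ_i, θ_i)] = μ̂_i) over the probability simplex, and suppose π_1 > 0 and π_2 > 0. Then π_2 · E[max(θ_1 − θ_2, 0)] = π_1 · E[max(θ_2 − θ_1, 0)]; equivalently, writing G_{i,j} := E[max(θ_i − θ_j, 0)] (which is strictly positive for Gaussian posteriors), π_2/π_1 = G_{2,1}/G_{1,2}. -/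

import Mathlib

open MeasureTheory ProbabilityTheory
open scoped NNReal

/-- The joint posterior on two arms: independent Gaussian coordinates
`θ_i ∼ N(μ̂_i, 1/N_i)`. -/
noncomputable def gaussPosterior2 (μhat : Fin 2 → ℝ) (N : Fin 2 → ℕ) :
    Measure (Fin 2 → ℝ) :=
  Measure.pi fun i => gaussianReal (μhat i) ((N i : ℝ≥0))⁻¹

/-- The `M = 2` ReMax objective for two arms, `J(π) = Σ_{i,j} π_i π_j E[max(θ_i, θ_j)]`,
where a repeated draw of the same arm reuses the same posterior sample (so the diagonal
term is `E[θ_i] = μ̂_i`). -/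
noncomputable def remaxJ2 (μhat : Fin 2 → ℝ) (N : Fin 2 → ℕ) (π : Fin 2 → ℝ) : ℝ :=
  ∫ θ, ∑ i, ∑ j, π i * π j * max (θ i) (θ j) ∂(gaussPosterior2 μhat N)

/-- The pairwise expected improvement `G_{i,j} = E[max(θ_i − θ_j, 0)]`. -/
noncomputable def pairEI2 (μhat : Fin 2 → ℝ) (N : Fin 2 → ℕ) (i j : Fin 2) : ℝ :=
  ∫ θ, max (θ i - θ j) 0 ∂(gaussPosterior2 μhat N)

/-! On the simplex `w 0 + w 1 = 1`, the identities
`max θ₀ θ₁ = θ₀ + (θ₁ - θ₀)⁺ = θ₁ + (θ₀ - θ₁)⁺` turn the objective into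
`J w = E[max θ₀ θ₁] - (w 0 ^ 2 * G₁₀ + w 1 ^ 2 * G₀₁)`, where indices start at `0` and
`Gᵢⱼ = pairEI2 i j`. So a maximizer minimizes `x² a + y² b` on the segment `x + y = 1`, with
`a = G₁₀` and `b = G₀₁` positive because the product Gaussian charges the quadrant
`{θⱼ < 0 < θᵢ}`. The identity `(a + b) (x² a + y² b) - a b (x + y)² = (x a - y b)²` shows that
the minimum `a b / (a + b)` is attained exactly at the balanced point `x a = y b`. -/

lemma sum_mul_max_eq_max_sub {θ w : Fin 2 → ℝ} (hw : w 0 + w 1 = 1) :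
    ∑ i, ∑ j, w i * w j * max (θ i) (θ j) =
      max (θ 0) (θ 1) - (w 0 ^ 2 * max (θ 1 - θ 0) 0 + w 1 ^ 2 * max (θ 0 - θ 1) 0) := by
  have h0 : max (θ 0) (θ 1) = θ 0 + max (θ 1 - θ 0) 0 := by
    rw [← max_add_add_left, add_sub_cancel, add_zero, max_comm]
  have h1 : max (θ 0) (θ 1) = θ 1 + max (θ 0 - θ 1) 0 := by
    rw [← max_add_add_left, add_sub_cancel, add_zero]
  simp only [Fin.sum_univ_two, max_self, max_comm (θ 1) (θ 0)]
  linear_combination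
    -(w 0 ^ 2) * h0 - w 1 ^ 2 * h1 + max (θ 0) (θ 1) * (w 0 + w 1 + 1) * hw

lemma integral_sum_mul_max_eq {μ : Measure (Fin 2 → ℝ)}
    (hint : ∀ i, Integrable (fun θ => θ i) μ) {w : Fin 2 → ℝ} (hw : w 0 + w 1 = 1) :
    ∫ θ, ∑ i, ∑ j, w i * w j * max (θ i) (θ j) ∂μ =
      ∫ θ, max (θ 0) (θ 1) ∂μ -
        (w 0 ^ 2 * ∫ θ, max (θ 1 - θ 0) 0 ∂μ + w 1 ^ 2 * ∫ θ, max (θ 0 - θ 1) 0 ∂μ) := by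
  have hmax : Integrable (fun θ : Fin 2 → ℝ => max (θ 0) (θ 1)) μ := (hint 0).sup (hint 1)
  have hpos (c : ℝ) (i j : Fin 2) :
      Integrable (fun θ : Fin 2 → ℝ => c * max (θ i - θ j) 0) μ :=
    ((hint i).sub (hint j)).pos_part.const_mul c
  have hsum : Integrable (fun θ : Fin 2 → ℝ =>
      w 0 ^ 2 * max (θ 1 - θ 0) 0 + w 1 ^ 2 * max (θ 0 - θ 1) 0) μ :=
    (hpos _ 1 0).add (hpos _ 0 1)
  simp_rw [sum_mul_max_eq_max_sub hw]
  rw [integral_sub hmax hsum, integral_add (hpos _ 1 0) (hpos _ 0 1),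
    integral_const_mul, integral_const_mul]

section PiGaussian

variable {ι : Type*} [Fintype ι] (m : ι → ℝ) (v : ι → ℝ≥0)

lemma integrable_eval_pi_gaussianReal (i : ι) :
    Integrable (fun θ : ι → ℝ => θ i) (Measure.pi fun k => gaussianReal (m k) (v k)) :=
  (measurePreserving_eval _ i).integrable_comp_of_integrable (g := id)
    ((memLp_id_gaussianReal 1).integrable le_rfl)

lemma integral_max_sub_pos_pi_gaussianReal (hv : ∀ k, v k ≠ 0) {i j : ι} (hij : i ≠ j) :
    0 < ∫ θ, max (θ i - θ j) 0 ∂(Measure.pi fun k => gaussianReal (m k) (v k)) := by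
  classical
  have hint := integrable_eval_pi_gaussianReal m v
  have hG : Integrable (fun θ : ι → ℝ => max (θ i - θ j) 0)
      (Measure.pi fun k => gaussianReal (m k) (v k)) := ((hint i).sub (hint j)).pos_part
  refine (integral_pos_iff_support_of_nonneg (fun θ => le_max_right _ _) hG).mpr ?_
  set s : ι → Set ℝ := Function.update (fun _ => Set.Iio 0) i (Set.Ioi 0)
  have hbox : Set.univ.pi s ⊆ Function.support fun θ : ι → ℝ => max (θ i - θ j) 0 := by
    intro θ hθ
    have hi : 0 < θ i := by simpa [s] using hθ i (Set.mem_univ i)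
    have hj : θ j < 0 := by simpa [s, hij.symm] using hθ j (Set.mem_univ j)
    rw [Function.mem_support, max_eq_left (by linarith)]
    linarith
  refine lt_of_lt_of_le ?_ (measure_mono hbox)
  rw [Measure.pi_pi, pos_iff_ne_zero, Finset.prod_ne_zero_iff]
  intro k _ hk0
  have hvol := gaussianReal_absolutelyContinuous' (m k) (hv k) hk0
  by_cases hk : k = i
  · subst hk; simp [s] at hvol
  · simp [s, hk] at hvol

end PiGaussian

lemma mul_eq_mul_of_forall_sq_mul_add_sq_mul_le {a b x y : ℝ} (ha : 0 < a) (hb : 0 < b)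
    (hxy : x + y = 1)
    (hmin : ∀ s t : ℝ, 0 ≤ s → 0 ≤ t → s + t = 1 →
      x ^ 2 * a + y ^ 2 * b ≤ s ^ 2 * a + t ^ 2 * b) :
    x * a = y * b := by
  have hab : 0 < a + b := add_pos ha hb
  have hopt := hmin (b / (a + b)) (a / (a + b)) (by positivity) (by positivity)
    (by field_simp; ring)
  have hval : (b / (a + b)) ^ 2 * a + (a / (a + b)) ^ 2 * b = a * b / (a + b) := by
    field_simp; ring
  rw [hval, le_div_iff₀ hab] at hopt
  have key : (a + b) * (x ^ 2 * a + y ^ 2 * b) - a * b * (x + y) ^ 2 = (x * a - y * b) ^ 2 := by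
    ring
  rw [hxy] at key
  nlinarith [sq_nonneg (x * a - y * b)]

lemma remaxJ2_eq_sub (μhat : Fin 2 → ℝ) (N : Fin 2 → ℕ) {w : Fin 2 → ℝ}
    (hw : w 0 + w 1 = 1) :
    remaxJ2 μhat N w = ∫ θ, max (θ 0) (θ 1) ∂(gaussPosterior2 μhat N) -
      (w 0 ^ 2 * pairEI2 μhat N 1 0 + w 1 ^ 2 * pairEI2 μhat N 0 1) :=
  integral_sum_mul_max_eq (integrable_eval_pi_gaussianReal _ _) hw

lemma pairEI2_pos (μhat : Fin 2 → ℝ) {N : Fin 2 → ℕ} (hN : ∀ i, 1 ≤ N i) {i j : Fin 2}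
    (hij : i ≠ j) : 0 < pairEI2 μhat N i j :=
  integral_max_sub_pos_pi_gaussianReal _ _
    (fun k => inv_ne_zero (Nat.cast_ne_zero.mpr (Nat.one_le_iff_ne_zero.mp (hN k)))) hij

theorem two_arm_ratio_balance_general
    (μhat : Fin 2 → ℝ) (N : Fin 2 → ℕ) (hN : ∀ i, 1 ≤ N i)
    (π : Fin 2 → ℝ) (hπ1 : ∑ i, π i = 1)
    (hmax : ∀ π' : Fin 2 → ℝ, (∀ i, 0 ≤ π' i) → (∑ i, π' i = 1) →
      remaxJ2 μhat N π' ≤ remaxJ2 μhat N π) :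
    0 < pairEI2 μhat N 0 1 ∧
    0 < pairEI2 μhat N 1 0 ∧
    π 1 * pairEI2 μhat N 0 1 = π 0 * pairEI2 μhat N 1 0 ∧
    π 1 / π 0 = pairEI2 μhat N 1 0 / pairEI2 μhat N 0 1 := by
  have hG01 := pairEI2_pos μhat hN (show (0 : Fin 2) ≠ 1 by decide)
  have hG10 := pairEI2_pos μhat hN (show (1 : Fin 2) ≠ 0 by decide)
  have hπ : π 0 + π 1 = 1 := by simpa only [Fin.sum_univ_two] using hπ1
  have hbal : π 0 * pairEI2 μhat N 1 0 = π 1 * pairEI2 μhat N 0 1 := by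
    refine mul_eq_mul_of_forall_sq_mul_add_sq_mul_le hG10 hG01 hπ fun s t hs ht hst => ?_
    have hle := hmax ![s, t] (Fin.forall_fin_two.mpr ⟨hs, ht⟩)
      (by simpa [Fin.sum_univ_two] using hst)
    rw [remaxJ2_eq_sub μhat N (w := ![s, t]) hst, remaxJ2_eq_sub μhat N hπ] at hle
    simp only [Matrix.cons_val_zero, Matrix.cons_val_one] at hle
    linarith
  have hπ0 : π 0 ≠ 0 := by
    rintro h
    rw [h, zero_add] at hπ
    rw [h, hπ, zero_mul, one_mul] at hbal
    exact hG01.ne hbal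
  refine ⟨hG01, hG10, hbal.symm, ?_⟩
  rw [div_eq_div_iff hπ0 hG01.ne']
  linarith

/-- Two-arm interior ReMax optimum: at an interior maximizer of the `M = 2` ReMax
objective, `π_2 G_{1,2} = π_1 G_{2,1}`; equivalently (`G_{1,2}, G_{2,1} > 0` for Gaussian
posteriors), `π_2/π_1 = G_{2,1}/G_{1,2}`. -/
theorem two_arm_ratio_balance
    (μhat : Fin 2 → ℝ) (N : Fin 2 → ℕ) (hN : ∀ i, 1 ≤ N i)
    (π : Fin 2 → ℝ) (hπ0 : ∀ i, 0 ≤ π i) (hπ1 : ∑ i, π i = 1)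
    (hmax : ∀ π' : Fin 2 → ℝ, (∀ i, 0 ≤ π' i) → (∑ i, π' i = 1) →
      remaxJ2 μhat N π' ≤ remaxJ2 μhat N π)
    (h1 : 0 < π 0) (h2 : 0 < π 1) :
    0 < pairEI2 μhat N 0 1 ∧
    0 < pairEI2 μhat N 1 0 ∧
    π 1 * pairEI2 μhat N 0 1 = π 0 * pairEI2 μhat N 1 0 ∧
    π 1 / π 0 = pairEI2 μhat N 1 0 / pairEI2 μhat N 0 1 :=
  two_arm_ratio_balance_general μhat N hN π hπ1 hmax
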